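/- Convergence of multi-parameter Tikhonov regularisation: assume F(x₀) = y for some x₀ ∈ D, y^(l) → y in σ, F^(l) → F in the d_{K,L}-sense, (S(y,y^(l)) + d_{K,L}(F^(l),F)) / Σ_k α_k^(l) → 0 and Σ_k α_k^(l) → 0, where K := {x : R_k(x) ≤ R_k(x₀)+1 for some k} and L := {y} ∪ {y^(l)}. Let x^(l) minimise T(·; α^(l), y^(l), F^(l)) and suppose the normalised parameters ᾱ^(l) := α^(l)/Σ_k α_k^(l) converge to ᾱ. Then every subsequence of {x^(l)} has a further subsequence τ-converging to some x† with F(x†) = y and Σ_k ᾱ_k R_k(x†) ≤ inf{ Σ_k ᾱ_k R_k(x) : x ∈ D, F(x) = y }. -/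

import Mathlib

open Filter Topology
open scoped ENNReal

/-- Convergence of a sequence in `Y` with respect to the topology `σ` induced by the
pseudo-metrics `d^(z)(y,ỹ) = |S(z,y) − S(z,ỹ)|`: `y^(l) → p` iff `S(z, y^(l)) → S(z,p)`
for every `z ∈ Y`. -/
def SigmaTendsto {Y : Type*} (S : Y → Y → ℝ) (y : ℕ → Y) (p : Y) : Prop :=
  ∀ z : Y, Tendsto (fun l => S z (y l)) atTop (nhds (S z p))

/-- Sequential compactness of a subset of `Y` with respect to the topology `σ`. -/
def SeqCompactSigma {Y : Type*} (S : Y → Y → ℝ) (L : Set Y) : Prop :=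
  ∀ y : ℕ → Y, (∀ l, y l ∈ L) →
    ∃ p ∈ L, ∃ φ : ℕ → ℕ, StrictMono φ ∧ SigmaTendsto S (fun l => y (φ l)) p

/-- Sequential lower semi-continuity of `(x,y) ↦ S(F(x),y)` with respect to `τ × σ`. -/
def SeqLSCop {X Y : Type*} [TopologicalSpace X] (S : Y → Y → ℝ) (F : X → Y) : Prop :=
  ∀ (x : ℕ → X) (x₀ : X) (y : ℕ → Y) (y₀ : Y),
    Tendsto x atTop (nhds x₀) → SigmaTendsto S y y₀ →
      S (F x₀) y₀ ≤ liminf (fun l => S (F (x l)) (y l)) atTop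

/-- The pseudo-metric `d_{K,L}(F,G) = sup {|S(F(x),z) − S(G(x),z)| : x ∈ K, z ∈ L}`
(with values in `[0,∞]`). -/
noncomputable def dKL {X Y : Type*} (S : Y → Y → ℝ) (K : Set X) (L : Set Y)
    (F G : X → Y) : ℝ≥0∞ :=
  ⨆ x ∈ K, ⨆ z ∈ L, ENNReal.ofReal |S (F x) z - S (G x) z|

/-- Convergence of operators `F^(l) → F` with respect to `τ`: `d_{K,L}(F^(l),F) → 0`
for every sequentially `τ`-compact `K ⊆ X` and sequentially `σ`-compact `L ⊆ Y`. -/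
def OpTendsto {X Y : Type*} [TopologicalSpace X] (S : Y → Y → ℝ)
    (F' : ℕ → X → Y) (F : X → Y) : Prop :=
  ∀ (K : Set X) (L : Set Y), IsSeqCompact K → SeqCompactSigma S L →
    Tendsto (fun l => dKL S K L (F' l) F) atTop (nhds 0)
/-- Sequential `τ`-coercivity: every sequence on which `R` is (finitely) bounded has a
`τ`-convergent subsequence. -/
def SeqCoercive {X : Type*} [TopologicalSpace X] (R : X → ℝ≥0∞) : Prop :=
  ∀ (u : ℕ → X) (c : ℝ≥0∞), c ≠ ⊤ → (∀ l, R (u l) ≤ c) →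
    ∃ (x : X) (φ : ℕ → ℕ), StrictMono φ ∧ Tendsto (fun l => u (φ l)) atTop (nhds x)

/-- Sequential `τ`-lower semi-continuity of `R : X → [0,∞]`. -/
def SeqLSC {X : Type*} [TopologicalSpace X] (R : X → ℝ≥0∞) : Prop :=
  ∀ (u : ℕ → X) (x : X), Tendsto u atTop (nhds x) →
    R x ≤ liminf (fun l => R (u l)) atTop

/-- The class `F(τ)`: `(x,y) ↦ S(F(x),y)` is sequentially `(τ×σ)`-lower semi-continuous and
the joint domain `D` of the regularisation terms is dense in the required sense. -/
def MemFtau {X Y : Type*} [TopologicalSpace X] {n : ℕ} (S : Y → Y → ℝ)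
    (R : Fin n → X → ℝ≥0∞) (F : X → Y) : Prop :=
  SeqLSCop S F ∧
  ∀ (x : X) (y : Y), ∃ u : ℕ → X,
    (∀ l k, R k (u l) ≠ ⊤) ∧
    Tendsto u atTop (nhds x) ∧
    (∀ k, Tendsto (fun l => R k (u l)) atTop (nhds (R k x))) ∧
    Tendsto (fun l => S (F (u l)) y) atTop (nhds (S (F x) y))

/-- The multi-parameter Tikhonov functional
`T(x; α, y, F) = S(F(x),y) + Σ_k α_k R_k(x)`, with the convention `α_k R_k(x) = 0` when
`α_k = 0` and `R_k(x) = ∞`. -/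
noncomputable def Tik {X Y : Type*} {n : ℕ} (S : Y → Y → ℝ) (R : Fin n → X → ℝ≥0∞)
    (α : Fin n → ℝ) (y : Y) (F : X → Y) (x : X) : ℝ≥0∞ :=
  ENNReal.ofReal (S (F x) y) + ∑ k, ENNReal.ofReal (α k) * R k x

/-!
The normalised Tikhonov functionals `T(·; α^(l), y^(l), F^(l)) / Σ_k α_k^(l)`, compared at the
minimiser `x^(l)` and at any exact solution `x ∈ K`, give
`Σ_k ᾱ_k^(l) R_k(x^(l)) ≤ ε_l + Σ_k ᾱ_k^(l) R_k(x)` with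
`ε_l = (S(y,y^(l)) + d_{K,L}(F^(l),F)) / Σ_k α_k^(l) → 0`. Taking `x = x₀`, this keeps `x^(l)` in
`K` and bounds `R_k(x^(l))` for a coordinate with `ᾱ_k > 0`, so coercivity yields a convergent
subsequence. Its limit solves `F(x) = y` because the data misfit at `x^(l)` tends to zero, and it
minimises `Σ_k ᾱ_k R_k` over the solutions by lower semi-continuity; solutions outside `K` are
beaten by `x₀` itself.
-/

namespace ENNReal

variable {ι : Type*} {f : Filter ι}

lemma le_liminf_add (u v : ι → ℝ≥0∞) : liminf u f + liminf v f ≤ liminf (u + v) f := by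
  rw [liminf_eq (u := u), liminf_eq (u := v), sSup_eq_iSup, sSup_eq_iSup]
  refine biSup_add_biSup_le ⟨0, by simp⟩ ⟨0, by simp⟩ fun a ha b hb => ?_
  exact le_liminf_of_le (by isBoundedDefault) ((ha.and hb).mono fun _ h => add_le_add h.1 h.2)

lemma sum_liminf_le_liminf_sum {κ : Type*} (s : Finset κ) (u : κ → ι → ℝ≥0∞) :
    ∑ k ∈ s, liminf (u k) f ≤ liminf (fun i => ∑ k ∈ s, u k i) f := by
  classical
  induction s using Finset.induction_on with
  | empty => simp
  | insert k s hk ih =>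
    simp only [Finset.sum_insert hk]
    exact (add_le_add le_rfl ih).trans (le_liminf_add (u k) _)

lemma tendsto_zero_of_div_ofReal {a : ι → ℝ≥0∞} {b : ι → ℝ} (hb : ∀ i, 0 < b i)
    (hb0 : Tendsto b f (𝓝 0)) (h : Tendsto (fun i => a i / ENNReal.ofReal (b i)) f (𝓝 0)) :
    Tendsto a f (𝓝 0) := by
  have := ENNReal.Tendsto.mul h (Or.inr zero_ne_top) (by simpa using tendsto_ofReal hb0)
    (Or.inr zero_ne_top)
  rw [mul_zero] at this
  exact this.congr fun i => ENNReal.div_mul_cancel (ofReal_pos.2 (hb i)).ne' ofReal_ne_top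

end ENNReal

lemma exists_pos_of_tendsto_of_sum_eq_one {ι : Type*} [Fintype ι] {w : ℕ → ι → ℝ}
    {wbar : ι → ℝ} (hw1 : ∀ l, ∑ k, w l k = 1)
    (hw : ∀ k, Tendsto (fun l => w l k) atTop (𝓝 (wbar k))) : ∃ k, 0 < wbar k := by
  have hsum : ∑ k, wbar k = 1 :=
    tendsto_nhds_unique (tendsto_finsetSum _ fun k _ => hw k)
      (tendsto_const_nhds.congr fun l => (hw1 l).symm)
  obtain ⟨k, -, hk⟩ := Finset.exists_lt_of_sum_lt (f := 0) (g := wbar) (s := Finset.univ)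
    (by simp [hsum])
  exact ⟨k, hk⟩

lemma SeqCoercive.exists_subseq_tendsto_of_eventually_le {X : Type*} [TopologicalSpace X]
    {R : X → ℝ≥0∞} (hR : SeqCoercive R) {u : ℕ → X} {c : ℝ≥0∞} (hc : c ≠ ⊤)
    (h : ∀ᶠ l in atTop, R (u l) ≤ c) :
    ∃ (x : X) (ψ : ℕ → ℕ), StrictMono ψ ∧ Tendsto (fun l => u (ψ l)) atTop (𝓝 x) := by
  obtain ⟨N, hN⟩ := eventually_atTop.1 h
  obtain ⟨x, χ, hχ, hconv⟩ := hR (fun l => u (N + l)) c hc fun l => hN _ (Nat.le_add_right N l)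
  exact ⟨x, fun l => N + χ l, fun a b hab => Nat.add_lt_add_left (hχ hab) N, hconv⟩

lemma SeqLSCop.eq_of_tendsto_misfit {X Y : Type*} [TopologicalSpace X] {S : Y → Y → ℝ}
    {F : X → Y} (hF : SeqLSCop S F) (hS0 : ∀ y z : Y, 0 ≤ S y z)
    (hSdef : ∀ y z : Y, S y z = 0 ↔ y = z) {u : ℕ → X} {x : X} {z : ℕ → Y} {y : Y}
    (hu : Tendsto u atTop (𝓝 x)) (hz : SigmaTendsto S z y)
    (h : Tendsto (fun l => ENNReal.ofReal (S (F (u l)) (z l))) atTop (𝓝 0)) : F x = y := by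
  have hreal : Tendsto (fun l => S (F (u l)) (z l)) atTop (𝓝 0) := by
    have := (ENNReal.tendsto_toReal ENNReal.zero_ne_top).comp h
    simpa only [Function.comp_def, ENNReal.toReal_ofReal (hS0 _ _), ENNReal.toReal_zero]
      using this
  have hle := hF u x z y hu hz
  rw [hreal.liminf_eq] at hle
  exact (hSdef _ _).1 (le_antisymm hle (hS0 _ _))

section Penalty

variable {X : Type*} {n : ℕ} {R : Fin n → X → ℝ≥0∞}

noncomputable def penalty (R : Fin n → X → ℝ≥0∞) (w : Fin n → ℝ) (x : X) : ℝ≥0∞ :=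
  ∑ k, ENNReal.ofReal (w k) * R k x

lemma Tik_eq_add_penalty {Y : Type*} (S : Y → Y → ℝ) (w : Fin n → ℝ) (y : Y) (F : X → Y)
    (x : X) : Tik S R w y F x = ENNReal.ofReal (S (F x) y) + penalty R w x :=
  rfl

lemma penalty_mono {w : Fin n → ℝ} {x x' : X} (h : ∀ k, R k x ≤ R k x') :
    penalty R w x ≤ penalty R w x' :=
  Finset.sum_le_sum fun k _ => by gcongr; exact h k

lemma penalty_div {w : Fin n → ℝ} {c : ℝ} (hc : 0 < c) (x : X) :
    penalty R (fun k => w k / c) x = penalty R w x / ENNReal.ofReal c := by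
  rw [penalty, penalty, div_eq_mul_inv, Finset.sum_mul]
  refine Finset.sum_congr rfl fun k _ => ?_
  rw [ENNReal.ofReal_div_of_pos hc, div_eq_mul_inv, mul_right_comm]

lemma penalty_le_sum {w : Fin n → ℝ} (hw : ∀ k, w k ≤ 1) (x : X) :
    penalty R w x ≤ ∑ k, R k x :=
  Finset.sum_le_sum fun k _ =>
    (mul_le_mul_left (ENNReal.ofReal_le_one.2 (hw k)) _).trans_eq (one_mul _)

lemma penalty_add_le {w : Fin n → ℝ} (hw0 : ∀ k, 0 ≤ w k) (hw1 : ∑ k, w k = 1) {x x' : X}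
    {c : ℝ≥0∞} (h : ∀ k, R k x + c ≤ R k x') : penalty R w x + c ≤ penalty R w x' := by
  calc penalty R w x + c = ∑ k, ENNReal.ofReal (w k) * (R k x + c) := by
        simp only [penalty, mul_add, Finset.sum_add_distrib, ← Finset.sum_mul,
          ← ENNReal.ofReal_sum_of_nonneg fun k _ => hw0 k, hw1, ENNReal.ofReal_one, one_mul]
    _ ≤ penalty R w x' := Finset.sum_le_sum fun k _ => by gcongr; exact h k

lemma le_div_of_penalty_le {w : Fin n → ℝ} {x : X} {k : Fin n} {c : ℝ} {C : ℝ≥0∞}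
    (hc : 0 < c) (hck : c ≤ w k) (h : penalty R w x ≤ C) : R k x ≤ C / ENNReal.ofReal c := by
  rw [ENNReal.le_div_iff_mul_le (Or.inl (ENNReal.ofReal_pos.2 hc).ne')
    (Or.inl ENNReal.ofReal_ne_top), mul_comm]
  calc ENNReal.ofReal c * R k x ≤ ENNReal.ofReal (w k) * R k x := by gcongr
    _ ≤ penalty R w x :=
      Finset.single_le_sum (f := fun j => ENNReal.ofReal (w j) * R j x)
        (fun _ _ => zero_le) (Finset.mem_univ k)
    _ ≤ C := h

lemma exists_le_add_one_of_penalty_le {w : Fin n → ℝ} (hw0 : ∀ k, 0 ≤ w k)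
    (hw1 : ∑ k, w k = 1) {x x₀ : X} (hx₀ : ∀ k, R k x₀ ≠ ⊤) {e : ℝ≥0∞}
    (h : penalty R w x ≤ e + penalty R w x₀) (he : e < 1) : ∃ k, R k x ≤ R k x₀ + 1 := by
  by_contra! hfar
  have hfin : penalty R w x₀ ≠ ⊤ :=
    ENNReal.sum_ne_top.2 fun k _ => ENNReal.mul_ne_top ENNReal.ofReal_ne_top (hx₀ k)
  have hlow := penalty_add_le hw0 hw1 fun k => (hfar k).le
  rw [add_comm e] at h
  exact he.not_ge ((ENNReal.add_le_add_iff_left hfin).1 (hlow.trans h))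

lemma tendsto_penalty {ι : Type*} {f : Filter ι} {w : ι → Fin n → ℝ} {wbar : Fin n → ℝ}
    (hw : ∀ k, Tendsto (fun i => w i k) f (𝓝 (wbar k))) {x : X} (hx : ∀ k, R k x ≠ ⊤) :
    Tendsto (fun i => penalty R (w i) x) f (𝓝 (penalty R wbar x)) :=
  tendsto_finsetSum _ fun k _ =>
    ENNReal.Tendsto.mul_const (ENNReal.tendsto_ofReal (hw k)) (Or.inr (hx k))

variable [TopologicalSpace X]

lemma penalty_le_liminf (hR : ∀ k, SeqLSC (R k)) {u : ℕ → X} {x : X} {w : ℕ → Fin n → ℝ}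
    {wbar : Fin n → ℝ} (hu : Tendsto u atTop (𝓝 x))
    (hw : ∀ k, Tendsto (fun l => w l k) atTop (𝓝 (wbar k))) :
    penalty R wbar x ≤ liminf (fun l => penalty R (w l) (u l)) atTop := by
  refine (Finset.sum_le_sum fun k _ => ?_).trans (ENNReal.sum_liminf_le_liminf_sum _ _)
  calc ENNReal.ofReal (wbar k) * R k x
      ≤ liminf (fun l => ENNReal.ofReal (w l k)) atTop * liminf (fun l => R k (u l)) atTop := by
        rw [(ENNReal.tendsto_ofReal (hw k)).liminf_eq]
        gcongr
        exact hR k u x hu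
    _ ≤ _ := ENNReal.le_liminf_mul

lemma penalty_le_of_tendsto (hR : ∀ k, SeqLSC (R k)) {u : ℕ → X} {xbar x : X}
    {w : ℕ → Fin n → ℝ} {wbar : Fin n → ℝ} {ε : ℕ → ℝ≥0∞} (hu : Tendsto u atTop (𝓝 xbar))
    (hw : ∀ k, Tendsto (fun l => w l k) atTop (𝓝 (wbar k))) (hε : Tendsto ε atTop (𝓝 0))
    (hx : ∀ k, R k x ≠ ⊤) (h : ∀ l, penalty R (w l) (u l) ≤ ε l + penalty R (w l) x) :
    penalty R wbar xbar ≤ penalty R wbar x := by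
  have hlim : Tendsto (fun l => ε l + penalty R (w l) x) atTop (𝓝 (penalty R wbar x)) := by
    simpa only [zero_add] using hε.add (tendsto_penalty hw hx)
  calc penalty R wbar xbar ≤ liminf (fun l => penalty R (w l) (u l)) atTop :=
        penalty_le_liminf hR hu hw
    _ ≤ liminf (fun l => ε l + penalty R (w l) x) atTop :=
        liminf_le_liminf (Eventually.of_forall h)
    _ = penalty R wbar x := hlim.liminf_eq

lemma exists_subseq_tendsto_of_penalty_le (hR : ∀ k, SeqCoercive (R k)) {u : ℕ → X}
    {x₀ : X} {w : ℕ → Fin n → ℝ} {wbar : Fin n → ℝ} {ε : ℕ → ℝ≥0∞} (hw0 : ∀ l k, 0 ≤ w l k)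
    (hw1 : ∀ l, ∑ k, w l k = 1) (hw : ∀ k, Tendsto (fun l => w l k) atTop (𝓝 (wbar k)))
    (hε : Tendsto ε atTop (𝓝 0)) (hx₀ : ∀ k, R k x₀ ≠ ⊤)
    (h : ∀ l, penalty R (w l) (u l) ≤ ε l + penalty R (w l) x₀) :
    ∃ (x : X) (ψ : ℕ → ℕ), StrictMono ψ ∧ Tendsto (fun l => u (ψ l)) atTop (𝓝 x) := by
  obtain ⟨k₀, hk₀⟩ := exists_pos_of_tendsto_of_sum_eq_one hw1 hw
  have hw_le_one : ∀ l k, w l k ≤ 1 := fun l k =>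
    hw1 l ▸ Finset.single_le_sum (fun j _ => hw0 l j) (Finset.mem_univ k)
  refine (hR k₀).exists_subseq_tendsto_of_eventually_le
    (c := (1 + ∑ k, R k x₀) / ENNReal.ofReal (wbar k₀ / 2))
    (ENNReal.div_ne_top (by simp [hx₀]) (by simp [hk₀])) ?_
  filter_upwards [hε.eventually_lt_const one_pos,
    (hw k₀).eventually_const_lt (half_lt_self hk₀)] with l hεl hwl
  exact le_div_of_penalty_le (half_pos hk₀) hwl.le
    ((h l).trans (add_le_add hεl.le (penalty_le_sum (hw_le_one l) x₀)))

end Penalty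

section Discrepancy

variable {X Y : Type*} {S : Y → Y → ℝ} {K : Set X} {L : Set Y} {F G : X → Y} {x : X} {z : Y}

lemma dKL_comm : dKL S K L F G = dKL S K L G F := by
  simp only [dKL, abs_sub_comm]

lemma ofReal_abs_sub_le_dKL (hx : x ∈ K) (hz : z ∈ L) :
    ENNReal.ofReal |S (F x) z - S (G x) z| ≤ dKL S K L F G :=
  le_iSup₂_of_le x hx (le_iSup₂_of_le z hz le_rfl)

lemma ofReal_le_add_dKL (hx : x ∈ K) (hz : z ∈ L) :
    ENNReal.ofReal (S (G x) z) ≤ ENNReal.ofReal (S (F x) z) + dKL S K L G F :=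
  calc ENNReal.ofReal (S (G x) z)
      ≤ ENNReal.ofReal (S (F x) z + |S (G x) z - S (F x) z|) :=
        ENNReal.ofReal_le_ofReal (by linarith [le_abs_self (S (G x) z - S (F x) z)])
    _ ≤ _ := ENNReal.ofReal_add_le.trans (add_le_add_right (ofReal_abs_sub_le_dKL hx hz) _)

end Discrepancy

section Minimiser

variable {X Y : Type*} {n : ℕ} {S : Y → Y → ℝ} {R : Fin n → X → ℝ≥0∞} {α : Fin n → ℝ} {z : Y}
  {G F : X → Y} {K : Set X} {L : Set Y} {x' x : X}

lemma penalty_le_of_isMinTik (hmin : ∀ x, Tik S R α z G x' ≤ Tik S R α z G x) (hx : x ∈ K)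
    (hz : z ∈ L) :
    penalty R α x' ≤ ENNReal.ofReal (S (F x) z) + dKL S K L G F + penalty R α x :=
  calc penalty R α x' ≤ Tik S R α z G x' := le_add_self
    _ ≤ Tik S R α z G x := hmin x
    _ ≤ _ := add_le_add_left (ofReal_le_add_dKL hx hz) _

lemma penalty_div_le_of_isMinTik (hmin : ∀ x, Tik S R α z G x' ≤ Tik S R α z G x)
    (hx : x ∈ K) (hz : z ∈ L) (hα : 0 < ∑ k, α k) :
    penalty R (fun k => α k / ∑ j, α j) x'
      ≤ (ENNReal.ofReal (S (F x) z) + dKL S K L G F) / ENNReal.ofReal (∑ k, α k)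
        + penalty R (fun k => α k / ∑ j, α j) x := by
  rw [penalty_div hα, penalty_div hα, ← ENNReal.add_div]
  exact ENNReal.div_le_div_right (penalty_le_of_isMinTik hmin hx hz) _

lemma ofReal_misfit_le_of_isMinTik (hmin : ∀ x, Tik S R α z G x' ≤ Tik S R α z G x)
    (hx' : x' ∈ K) (hx : x ∈ K) (hz : z ∈ L) :
    ENNReal.ofReal (S (F x') z)
      ≤ ENNReal.ofReal (S (F x) z) + dKL S K L G F + dKL S K L G F + penalty R α x :=
  calc ENNReal.ofReal (S (F x') z) ≤ ENNReal.ofReal (S (G x') z) + dKL S K L G F := by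
        rw [dKL_comm]; exact ofReal_le_add_dKL hx' hz
    _ ≤ Tik S R α z G x + dKL S K L G F := by
        gcongr
        exact le_self_add.trans (hmin x)
    _ ≤ _ := by
        rw [Tik_eq_add_penalty, add_right_comm]
        gcongr
        exact ofReal_le_add_dKL hx hz

lemma tendsto_misfit_of_isMinTik {α : ℕ → Fin n → ℝ} {y' : ℕ → Y} {F' : ℕ → X → Y}
    {x' : ℕ → X} {x₀ : X}
    (hmin : ∀ l x, Tik S R (α l) (y' l) (F' l) (x' l) ≤ Tik S R (α l) (y' l) (F' l) x)
    (hx' : ∀ᶠ l in atTop, x' l ∈ K) (hx₀ : x₀ ∈ K) (hx₀R : ∀ k, R k x₀ ≠ ⊤)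
    (hy' : ∀ l, y' l ∈ L) (hα : ∀ l k, 0 ≤ α l k)
    (hα0 : Tendsto (fun l => ∑ k, α l k) atTop (𝓝 0))
    (hδ : Tendsto (fun l => ENNReal.ofReal (S (F x₀) (y' l)) + dKL S K L (F' l) F) atTop (𝓝 0)) :
    Tendsto (fun l => ENNReal.ofReal (S (F (x' l)) (y' l))) atTop (𝓝 0) := by
  have hd : Tendsto (fun l => dKL S K L (F' l) F) atTop (𝓝 0) :=
    tendsto_of_tendsto_of_tendsto_of_le_of_le tendsto_const_nhds hδ (fun _ => zero_le)
      fun _ => le_add_self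
  have hpen : Tendsto (fun l => penalty R (α l) x₀) atTop (𝓝 0) := by
    have hαk : ∀ k, Tendsto (fun l => α l k) atTop (𝓝 0) := fun k =>
      squeeze_zero (fun l => hα l k)
        (fun l => Finset.single_le_sum (fun j _ => hα l j) (Finset.mem_univ k)) hα0
    simpa [penalty] using tendsto_penalty (wbar := 0) hαk hx₀R
  have hbound := (hδ.add hd).add hpen
  simp only [add_zero] at hbound
  refine tendsto_of_tendsto_of_tendsto_of_le_of_le' tendsto_const_nhds hbound
    (Eventually.of_forall fun _ => zero_le) ?_
  filter_upwards [hx'] with l hl using ofReal_misfit_le_of_isMinTik (hmin l) hl hx₀ (hy' l)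

end Minimiser

theorem tikhonov_convergence_general {X Y : Type*} [TopologicalSpace X] {n : ℕ}
    (S : Y → Y → ℝ) (hS0 : ∀ y z : Y, 0 ≤ S y z) (hSdef : ∀ y z : Y, S y z = 0 ↔ y = z)
    (R : Fin n → X → ℝ≥0∞)
    (hcoer : ∀ k, SeqCoercive (R k)) (hlsc : ∀ k, SeqLSC (R k))
    (F : X → Y) (F' : ℕ → X → Y) (hF : MemFtau S R F)
    (y : Y) (x₀ : X) (hx₀D : ∀ k, R k x₀ ≠ ⊤) (hx₀sol : F x₀ = y)
    (y' : ℕ → Y) (hy : SigmaTendsto S y' y)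
    (α : ℕ → Fin n → ℝ) (hα : ∀ l k, 0 ≤ α l k) (hαne : ∀ l, α l ≠ 0)
    (K : Set X) (hK : K = {x : X | ∃ k, R k x ≤ R k x₀ + 1})
    (L : Set Y) (hL : L = insert y (Set.range y'))
    (hcond : Tendsto
      (fun l => (ENNReal.ofReal (S y (y' l)) + dKL S K L (F' l) F)
          / ENNReal.ofReal (∑ k, α l k)) atTop (nhds 0))
    (hαto0 : Tendsto (fun l => ∑ k, α l k) atTop (nhds 0))
    (x' : ℕ → X)
    (hmin : ∀ l x, Tik S R (α l) (y' l) (F' l) (x' l) ≤ Tik S R (α l) (y' l) (F' l) x)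
    (αbar : Fin n → ℝ)
    (hαbar : ∀ k, Tendsto (fun l => α l k / ∑ j, α l j) atTop (nhds (αbar k))) :
    ∀ φ : ℕ → ℕ, StrictMono φ →
      ∃ ψ : ℕ → ℕ, StrictMono ψ ∧ ∃ xdag : X,
        Tendsto (fun l => x' (φ (ψ l))) atTop (nhds xdag) ∧ F xdag = y ∧
        ∀ x : X, (∀ k, R k x ≠ ⊤) → F x = y →
          ∑ k, ENNReal.ofReal (αbar k) * R k xdag
            ≤ ∑ k, ENNReal.ofReal (αbar k) * R k x := by
  intro φ hφ
  have hsum_pos : ∀ l, 0 < ∑ k, α l k := fun l =>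
    Fintype.sum_pos ((Pi.le_def.2 (hα l)).lt_of_ne' (hαne l))
  set β : ℕ → Fin n → ℝ := fun l k => α l k / ∑ j, α l j
  have hβ0 : ∀ l k, 0 ≤ β l k := fun l k => div_nonneg (hα l k) (hsum_pos l).le
  have hβ1 : ∀ l, ∑ k, β l k = 1 := fun l => by
    rw [← Finset.sum_div, div_self (hsum_pos l).ne']
  have hx₀K : x₀ ∈ K := by
    obtain ⟨k, -⟩ := Function.ne_iff.1 (hαne 0)
    exact hK ▸ ⟨k, le_self_add⟩
  have hy'L : ∀ l, y' l ∈ L := fun l => hL ▸ Set.mem_insert_of_mem _ ⟨l, rfl⟩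
  have hkey : ∀ l x, x ∈ K → F x = y → penalty R (β l) (x' l)
      ≤ (ENNReal.ofReal (S y (y' l)) + dKL S K L (F' l) F) / ENNReal.ofReal (∑ k, α l k)
        + penalty R (β l) x := by
    rintro l x hx rfl
    exact penalty_div_le_of_isMinTik (hmin l) hx (hy'L l) (hsum_pos l)
  have hφ_tendsto := hφ.tendsto_atTop
  obtain ⟨xdag, ψ, hψ, hconv⟩ := exists_subseq_tendsto_of_penalty_le hcoer (fun l => hβ0 (φ l))
    (fun l => hβ1 (φ l)) (fun k => (hαbar k).comp hφ_tendsto) (hcond.comp hφ_tendsto) hx₀D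
    fun l => hkey (φ l) x₀ hx₀K hx₀sol
  have hφψ : Tendsto (fun l => φ (ψ l)) atTop atTop := (hφ.comp hψ).tendsto_atTop
  have hx'K : ∀ᶠ l in atTop, x' l ∈ K := by
    filter_upwards [hcond.eventually_lt_const one_pos] with l hl
    exact hK ▸ exists_le_add_one_of_penalty_le (hβ0 l) (hβ1 l) hx₀D (hkey l x₀ hx₀K hx₀sol) hl
  have hδ := ENNReal.tendsto_zero_of_div_ofReal hsum_pos hαto0 hcond
  rw [← hx₀sol] at hδ
  have hFxdag : F xdag = y := hF.1.eq_of_tendsto_misfit hS0 hSdef hconv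
    (fun z => (hy z).comp hφψ)
    ((tendsto_misfit_of_isMinTik hmin hx'K hx₀K hx₀D hy'L hα hαto0 hδ).comp hφψ)
  have hopt_K : ∀ x, (∀ k, R k x ≠ ⊤) → F x = y → x ∈ K →
      penalty R αbar xdag ≤ penalty R αbar x := fun x hxD hxy hxK =>
    penalty_le_of_tendsto hlsc hconv (fun k => (hαbar k).comp hφψ) (hcond.comp hφψ) hxD
      fun l => hkey _ x hxK hxy
  refine ⟨ψ, hψ, xdag, hconv, hFxdag, fun x hxD hxy => ?_⟩
  by_cases hxK : x ∈ K
  · exact hopt_K x hxD hxy hxK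
  · simp only [hK, Set.mem_ofPred_eq, not_exists, not_le] at hxK
    exact (hopt_K x₀ hx₀D hx₀sol hx₀K).trans (penalty_mono fun k => le_self_add.trans (hxK k).le)

/-- convergence of multi-parameter Tikhonov regularisation: assume
`F(x₀) = y` with `x₀ ∈ D`, `y^(l) → y` in `σ`, `F^(l) → F` in the `d_{K,L}`-sense, the
parameter conditions `(S(y,y^(l)) + d_{K,L}(F^(l),F)) / Σ_k α_k^(l) → 0` and
`Σ_k α_k^(l) → 0` hold (with `K = {x : R_k(x) ≤ R_k(x₀)+1 for some k}`,
`L = {y} ∪ {y^(l)}`), `x^(l)` minimises `T(·; α^(l), y^(l), F^(l))`, and the normalised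
parameters `ᾱ^(l) = α^(l)/Σ_k α_k^(l)` converge to `ᾱ`.  Then every subsequence of
`{x^(l)}` has a further subsequence `τ`-converging to some `x†` with `F(x†) = y` and
`Σ_k ᾱ_k R_k(x†) ≤ inf { Σ_k ᾱ_k R_k(x) : x ∈ D, F(x) = y }`. -/
theorem tikhonov_convergence {X Y : Type*} [TopologicalSpace X] {n : ℕ}
    (S : Y → Y → ℝ) (hS0 : ∀ y z : Y, 0 ≤ S y z) (hSdef : ∀ y z : Y, S y z = 0 ↔ y = z)
    (R : Fin n → X → ℝ≥0∞)
    (hcoer : ∀ k, SeqCoercive (R k)) (hlsc : ∀ k, SeqLSC (R k))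
    (F : X → Y) (F' : ℕ → X → Y) (hF : MemFtau S R F) (hF' : ∀ l, MemFtau S R (F' l))
    (hop : OpTendsto S F' F)
    (y : Y) (x₀ : X) (hx₀D : ∀ k, R k x₀ ≠ ⊤) (hx₀sol : F x₀ = y)
    (y' : ℕ → Y) (hy : SigmaTendsto S y' y)
    (α : ℕ → Fin n → ℝ) (hα : ∀ l k, 0 ≤ α l k) (hαne : ∀ l, α l ≠ 0)
    (K : Set X) (hK : K = {x : X | ∃ k, R k x ≤ R k x₀ + 1})
    (L : Set Y) (hL : L = insert y (Set.range y'))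
    (hcond : Tendsto
      (fun l => (ENNReal.ofReal (S y (y' l)) + dKL S K L (F' l) F)
          / ENNReal.ofReal (∑ k, α l k)) atTop (nhds 0))
    (hαto0 : Tendsto (fun l => ∑ k, α l k) atTop (nhds 0))
    (x' : ℕ → X)
    (hmin : ∀ l x, Tik S R (α l) (y' l) (F' l) (x' l) ≤ Tik S R (α l) (y' l) (F' l) x)
    (αbar : Fin n → ℝ)
    (hαbar : ∀ k, Tendsto (fun l => α l k / ∑ j, α l j) atTop (nhds (αbar k))) :
    ∀ φ : ℕ → ℕ, StrictMono φ →
      ∃ ψ : ℕ → ℕ, StrictMono ψ ∧ ∃ xdag : X,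
        Tendsto (fun l => x' (φ (ψ l))) atTop (nhds xdag) ∧ F xdag = y ∧
        ∀ x : X, (∀ k, R k x ≠ ⊤) → F x = y →
          ∑ k, ENNReal.ofReal (αbar k) * R k xdag
            ≤ ∑ k, ENNReal.ofReal (αbar k) * R k x :=
  tikhonov_convergence_general S hS0 hSdef R hcoer hlsc F F' hF y x₀ hx₀D hx₀sol y' hy α hα hαne K
    hK L hL hcond hαto0 x' hmin αbar hαbar
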